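/- Let S be a Stallings section for an m-epi π : Ã* → G. Then the word problem language 1π⁻¹ = {w ∈ Ã* : wπ = 1} is a context-free language. -/

import Mathlib

/-!  Common framework: words over an involutive alphabet Ã = A ∪ A⁻¹ (modelled as
`α × Bool`), free reduction, matched epimorphisms, Stallings sections and
Ã-automata, following Silva–Soler-Escrivà–Ventura. -/

/-- A word over the involutive alphabet Ã = A ∪ A⁻¹: the letter `(a, tt)` denotes
`a` and `(a, ff)` denotes `a⁻¹` (the `FreeGroup` convention). -/
abbrev Word (α : Type) : Type := List (α × Bool)

namespace Stallings

instance {β : Type} : HasSubset (Language β) := ⟨fun L M => ∀ w ∈ L, w ∈ M⟩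
instance {β : Type} : Union (Language β) := ⟨fun L M => {w | w ∈ L ∨ w ∈ M}⟩
instance {β : Type} : Inter (Language β) := ⟨fun L M => {w | w ∈ L ∧ w ∈ M}⟩
instance {β : Type} : EmptyCollection (Language β) := ⟨(∅ : Set (List β))⟩

variable {α : Type} {G : Type} [Group G]

/-- The formal inverse of a letter of Ã. -/
def letterInv (x : α × Bool) : α × Bool := (x.1, !x.2)

/-- The formal inverse `w⁻¹` of a word over Ã. -/
def wordInv (w : Word α) : Word α := (w.map letterInv).reverse

/-- The free reduction `w̄` of a word over Ã (iterated deletion of factors `a a⁻¹`). -/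
noncomputable def redW (w : Word α) : Word α :=
  letI := Classical.decEq α
  FreeGroup.reduce w

/-- The reduction `L̄` of a language over Ã. -/
noncomputable def red (L : Language (α × Bool)) : Language (α × Bool) :=
  redW '' L

/-- The set `R_A` of reduced words over Ã. -/
noncomputable def Reduced : Language (α × Bool) := {w | redW w = w}

/-- Evaluation of a monoid homomorphism `π : Ã* → G` at a word. -/
def ev (π : FreeMonoid (α × Bool) →* G) (w : Word α) : G :=
  π (FreeMonoid.ofList w)

/-- The image of a language under (evaluation of) `π`. -/
def evImg (π : FreeMonoid (α × Bool) →* G) (L : Language (α × Bool)) : Set G :=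
  {g | ∃ w ∈ L, ev π w = g}

/-- A matched epimorphism (m-epi) `π : Ã* → G`: a surjective monoid homomorphism
sending formal inverses to inverses. -/
structure IsMEpi (π : FreeMonoid (α × Bool) →* G) : Prop where
  surjective : Function.Surjective π
  matched : ∀ (a : α) (b : Bool),
    π (FreeMonoid.of (a, !b)) = (π (FreeMonoid.of (a, b)))⁻¹

/-- `S_X = Xπ⁻¹ ∩ S`, for `X ⊆ G`. -/
def sub (S : Language (α × Bool)) (π : FreeMonoid (α × Bool) →* G) (X : Set G) :
    Language (α × Bool) :=
  {w ∈ S | ev π w ∈ X}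

/-- A Stallings section for an m-epi `π : Ã* → G`: a regular section `S ⊆ R_A`
such that each `S_g` is regular (S1), and `S_{gh} ⊆ (S_g S_h)‾` (S2). -/
structure IsStallingsSection (π : FreeMonoid (α × Bool) →* G)
    (S : Language (α × Bool)) : Prop where
  regular : S.IsRegular
  reduced : S ⊆ Reduced
  inv_mem : ∀ w ∈ S, wordInv w ∈ S
  exists_rep : ∀ g : G, ∃ w ∈ S, ev π w = g
  s1 : ∀ g : G, (sub S π {g}).IsRegular
  s2 : ∀ g h : G, sub S π {g * h} ⊆ red (sub S π {g} * sub S π {h})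

/-- A group has a Stallings section if some m-epi onto it (from the free monoid on
an involutive finite alphabet) admits a Stallings section. -/
def HasStallingsSection (G : Type) [Group G] : Prop :=
  ∃ (α : Type) (π : FreeMonoid (α × Bool) →* G) (S : Language (α × Bool)),
    Finite α ∧ IsMEpi π ∧ IsStallingsSection π S

/-- `Pref L`: the set of prefixes of words of `L`. -/
def Pref (L : Language (α × Bool)) : Language (α × Bool) :=
  {u | ∃ v, u ++ v ∈ L}

/-- An extendable Stallings section: every `u ∈ S` admits a reduced word `v` with
`u vⁿ ∈ S` for all `n` and `u ∈ Pref (S_{(u vⁿ u⁻¹)π})` for almost all `n`. -/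
def Extendable (π : FreeMonoid (α × Bool) →* G) (S : Language (α × Bool)) : Prop :=
  ∀ u ∈ S, ∃ v : Word α, v ∈ Reduced ∧
    (∀ n : ℕ, u ++ (List.replicate n v).flatten ∈ S) ∧
    ∃ N : ℕ, ∀ n ≥ N, u ∈ Pref (sub S π {ev π u * (ev π v) ^ n * (ev π u)⁻¹})

/-- An Ã-automaton with state type `Q`, initial state `start`, terminal states
`accept` and edge set `edges`. -/
structure Automaton (β : Type) (Q : Type) where
  start : Q
  accept : Set Q
  edges : Set (Q × β × Q)

namespace Automaton

variable {β Q : Type}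

/-- `M.Path p w q`: there is a path from `p` to `q` labelled `w`. -/
inductive Path (M : Automaton β Q) : Q → List β → Q → Prop
  | nil (q : Q) : Path M q [] q
  | cons {p q r : Q} {a : β} {w : List β} :
      (p, a, q) ∈ M.edges → Path M q w r → Path M p (a :: w) r

/-- The language recognized by an automaton. -/
def lang (M : Automaton β Q) : Language β :=
  {w | ∃ t ∈ M.accept, M.Path M.start w t}

/-- A trim automaton: every state lies on some successful path. -/
def Trim (M : Automaton β Q) : Prop :=
  ∀ q : Q, ∃ (u v : List β) (t : Q), t ∈ M.accept ∧ M.Path M.start u q ∧ M.Path q v t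

/-- An involutive Ã-automaton. -/
def Involutive {α : Type} (M : Automaton (α × Bool) Q) : Prop :=
  ∀ p a q, (p, a, q) ∈ M.edges → (q, letterInv a, p) ∈ M.edges

/-- A deterministic automaton. -/
def Deterministic (M : Automaton β Q) : Prop :=
  ∀ p a q q', (p, a, q) ∈ M.edges → (p, a, q') ∈ M.edges → q = q'

/-- An inverse automaton: involutive, deterministic, trim, with a single
terminal state. -/
def IsInverse {α : Type} (M : Automaton (α × Bool) Q) : Prop :=
  M.Involutive ∧ M.Deterministic ∧ M.Trim ∧ ∃ t : Q, M.accept = {t}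

/-- The automaton obtained by identifying the states `p` and `q` (the quotient is
realized on the same state type, redirecting `q` to `p`). -/
def merge [DecidableEq Q] (M : Automaton β Q) (p q : Q) : Automaton β Q :=
  let f : Q → Q := fun x => if x = q then p else x
  { start := f M.start
    accept := f '' M.accept
    edges := {e | ∃ e' ∈ M.edges, e = (f e'.1, e'.2.1, f e'.2.2)} }

end Automaton

end Stallings

/-! The word problem is recognised by a pushdown automaton whose stack holds, after each letter, a
word of `S` representing the prefix read so far. By (S2), reading a letter `a` turns a stack `x y`
into `x t` with `y⁻¹ t ∈ S_a`; since a DFA for `S_a` accepts only words of one value, its loops have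
value `1` and can be pumped out, so `y` and `t` may be taken shorter than its number of states.
Hence the automaton only ever rewrites a bounded top segment of the stack, and its runs are
derivations of a grammar whose nonterminals are the group elements of bounded length, with rules
`g * h → g h`. -/

open FreeMonoid Pointwise

namespace WordProblem

variable {β G : Type} [Group G] (π : FreeMonoid β →* G)

section Grammar

def weight : Symbol β G → G
  | .terminal a => π (of a)
  | .nonterminal g => g

lemma prod_weight_map_terminal (w : List β) :
    ((w.map .terminal).map (weight π)).prod = π (ofList w) := by
  induction w with
  | nil => simp
  | cons a w ih => simp [ofList_cons, ← ih, weight]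

variable (F : Set G)

/-- The nonterminal `g` stands for a path of value `g` in the Cayley graph; a derivation from `1`
cuts a closed path into triangles whose sides have values in `F`. -/
def triangleRules : Set (ContextFreeRule β G) :=
  Set.image2 (fun h k => ⟨h * k, [.nonterminal h, .nonterminal k]⟩) F F ∪
    Set.range (fun a => ⟨π (of a), [.terminal a]⟩) ∪ {⟨1, []⟩}

variable {π F}

lemma prod_weight_output {r : ContextFreeRule β G} (hr : r ∈ triangleRules π F) :
    (r.output.map (weight π)).prod = r.input := by
  rcases hr with (⟨h, -, k, -, rfl⟩ | ⟨a, rfl⟩) | rfl <;> simp [weight]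

variable (π)

lemma triangleRules_finite [Finite β] (hF : F.Finite) : (triangleRules π F).Finite :=
  ((hF.image2 _ hF).union (Set.finite_range _)).union (Set.finite_singleton _)

noncomputable abbrev triangleGrammar [Finite β] (hF : F.Finite) : ContextFreeGrammar β where
  NT := G
  initial := 1
  rules := (triangleRules_finite π hF).toFinset

variable [Finite β] (hF : F.Finite)

def derivable (g : G) : Language β :=
  {w | (triangleGrammar π hF).Derives [.nonterminal g] (w.map .terminal)}

variable {π hF}

lemma derives_of_mem_triangleRules {r : ContextFreeRule β G} (hr : r ∈ triangleRules π F) :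
    (triangleGrammar π hF).Derives [.nonterminal r.input] r.output :=
  Relation.ReflTransGen.single
    ⟨r, (Set.Finite.mem_toFinset _).2 hr, ContextFreeRule.Rewrites.input_output⟩

lemma nil_mem_derivable_one : [] ∈ derivable π hF 1 :=
  derives_of_mem_triangleRules (r := ⟨1, []⟩) (Or.inr rfl)

lemma singleton_mem_derivable (a : β) : [a] ∈ derivable π hF (π (of a)) :=
  derives_of_mem_triangleRules (r := ⟨π (of a), [.terminal a]⟩) (Or.inl (Or.inr ⟨a, rfl⟩))

lemma append_mem_derivable {h k : G} (hh : h ∈ F) (hk : k ∈ F) {w₁ w₂ : List β}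
    (h₁ : w₁ ∈ derivable π hF h) (h₂ : w₂ ∈ derivable π hF k) :
    w₁ ++ w₂ ∈ derivable π hF (h * k) := by
  have split : (triangleGrammar π hF).Derives [.nonterminal (h * k)]
      [.nonterminal h, .nonterminal k] :=
    derives_of_mem_triangleRules (Or.inl (Or.inl ⟨h, hh, k, hk, rfl⟩))
  show (triangleGrammar π hF).Derives _ _
  rw [List.map_append]
  exact split.trans ((h₁.append_right [.nonterminal k]).trans (h₂.append_left _))

lemma prod_weight_eq_of_derives {u v : List (Symbol β G)}
    (huv : (triangleGrammar π hF).Derives u v) :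
    (u.map (weight π)).prod = (v.map (weight π)).prod := by
  induction huv with
  | refl => rfl
  | tail _ hstep ih =>
      obtain ⟨r, hr, hrw⟩ := hstep
      obtain ⟨p, q, rfl, rfl⟩ := hrw.exists_parts
      rw [ih]
      simp [prod_weight_output ((Set.Finite.mem_toFinset _).1 hr), weight]

lemma map_ofList_of_mem_derivable {g : G} {w : List β} (hw : w ∈ derivable π hF g) :
    π (ofList w) = g := by
  have h := (prod_weight_eq_of_derives hw).symm
  rw [prod_weight_map_terminal] at h
  simpa [weight] using h

end Grammar

/-- `Run π C g u w h v`: a pushdown automaton with control states in `C` goes from state `g` and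
stack `u` (top at the end) to state `h` and stack `v` reading `w`. Every move preserves
`π u * g * π w'`, where `w'` is the input still to be read. -/
inductive Run (C : Set G) : G → List β → List β → G → List β → Prop
  | nil (g : G) (u : List β) : Run C g u [] g u
  | read {g : G} {a : β} {u w : List β} {h : G} {v : List β} :
      g * π (of a) ∈ C → Run C (g * π (of a)) u w h v → Run C g u (a :: w) h v
  | push {g : G} {x : β} {u w : List β} {h : G} {v : List β} :
      (π (of x))⁻¹ * g ∈ C → Run C ((π (of x))⁻¹ * g) (u ++ [x]) w h v → Run C g u w h v
  | pop {g : G} {x : β} {u w : List β} {h : G} {v : List β} :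
      π (of x) * g ∈ C → Run C (π (of x) * g) u w h v → Run C g (u ++ [x]) w h v

variable {π} {C : Set G}

namespace Run

lemma trans {g h k : G} {u v v' w w' : List β} (h₁ : Run π C g u w h v)
    (h₂ : Run π C h v w' k v') : Run π C g u (w ++ w') k v' := by
  induction h₁ with
  | nil => exact h₂
  | read hC _ ih => exact .read hC (ih h₂)
  | push hC _ ih => exact .push hC (ih h₂)
  | pop hC _ ih => exact .pop hC (ih h₂)

lemma append_left {g h : G} {u v w : List β} (hr : Run π C g u w h v) (z : List β) :
    Run π C g (z ++ u) w h (z ++ v) := by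
  induction hr with
  | nil => exact .nil _ _
  | read hC _ ih => exact .read hC ih
  | push hC _ ih => exact .push hC (by simpa using ih)
  | pop hC _ ih => simpa using Run.pop hC ih

end Run

section Pending

variable [Finite β] (hC : C.Finite)

variable (π) in
/-- `pending g σ h` is the language of runs from state `g` with stack `σ.reverse` down to state
`h` with empty stack, cut at the moments the letters of `σ` are popped. -/
def pending : G → List β → G → Language β
  | g, [], h => derivable π (hC.inv.mul hC) (g⁻¹ * h)
  | g, x :: σ, h => {w | ∃ k ∈ C, π (of x) * k ∈ C ∧ ∃ w₁ w₂, w = w₁ ++ w₂ ∧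
      w₁ ∈ derivable π (hC.inv.mul hC) (g⁻¹ * k) ∧ w₂ ∈ pending (π (of x) * k) σ h}

variable {hC}

lemma append_mem_derivable_inv_mul {a b c d : G} (ha : a ∈ C) (hb : b ∈ C) (hc : c ∈ C)
    (hd : d ∈ C) {w₁ w₂ : List β} (h₁ : w₁ ∈ derivable π (hC.inv.mul hC) (a⁻¹ * b))
    (h₂ : w₂ ∈ derivable π (hC.inv.mul hC) (c⁻¹ * d)) :
    w₁ ++ w₂ ∈ derivable π (hC.inv.mul hC) (a⁻¹ * b * (c⁻¹ * d)) :=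
  append_mem_derivable (Set.mul_mem_mul (Set.inv_mem_inv.2 ha) hb)
    (Set.mul_mem_mul (Set.inv_mem_inv.2 hc) hd) h₁ h₂

lemma cons_mem_pending {g h : G} {a : β} {σ : List β} {w : List β} (hg : g ∈ C)
    (hga : g * π (of a) ∈ C) (hh : h ∈ C) (hw : w ∈ pending π hC (g * π (of a)) σ h) :
    a :: w ∈ pending π hC g σ h := by
  have hcons : ∀ {k : G} {w : List β}, k ∈ C →
      w ∈ derivable π (hC.inv.mul hC) ((g * π (of a))⁻¹ * k) →
      a :: w ∈ derivable π (hC.inv.mul hC) (g⁻¹ * k) := fun hk hw => by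
    have := append_mem_derivable_inv_mul (hC := hC) hg hga hga hk
      (by simpa using singleton_mem_derivable (hF := hC.inv.mul hC) a) hw
    simpa [mul_assoc] using this
  cases σ with
  | nil => exact hcons hh hw
  | cons x σ =>
      obtain ⟨k, hk, hxk, w₁, w₂, rfl, h₁, h₂⟩ := hw
      exact ⟨k, hk, hxk, a :: w₁, w₂, rfl, hcons hk h₁, h₂⟩

lemma Run.mem_pending {g h : G} {u v w : List β} (hr : Run π C g u w h v) (hv : v = [])
    (hg : g ∈ C) (hh : h ∈ C) : w ∈ pending π hC g u.reverse h := by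
  induction hr with
  | nil g u =>
      subst hv
      simpa [pending] using nil_mem_derivable_one
  | read hmem _ ih => exact cons_mem_pending hg hmem hh (ih hv hmem hh)
  | @push g x u w h v hmem _ ih =>
      obtain ⟨k, hk, hxk, w₁, w₂, rfl, h₁, h₂⟩ := by simpa using ih hv hmem hh
      cases hσ : u.reverse with
      | nil =>
          rw [hσ] at h₂
          simp only [pending] at h₂ ⊢
          simpa [mul_assoc] using append_mem_derivable_inv_mul (hC := hC) hmem hk hxk hh h₁ h₂
      | cons y σ =>
          rw [hσ] at h₂
          obtain ⟨k', hk', hyk', w₃, w₄, rfl, h₃, h₄⟩ := h₂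
          refine ⟨k', hk', hyk', w₁ ++ w₃, w₄, (List.append_assoc _ _ _).symm, ?_, h₄⟩
          simpa [mul_assoc] using append_mem_derivable_inv_mul (hC := hC) hmem hk hxk hk' h₁ h₃
  | @pop g x u w h v hmem _ ih =>
      simp only [List.reverse_append, List.reverse_singleton, List.singleton_append]
      exact ⟨g, hg, hmem, [], w, rfl, by simpa using nil_mem_derivable_one, ih hv hmem hh⟩

end Pending

theorem isContextFree_of_forall_run [Finite β] (hC : C.Finite) (h1 : 1 ∈ C)
    (hrun : ∀ w : List β, π (ofList w) = 1 → Run π C 1 [] w 1 []) :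
    Language.IsContextFree {w : List β | π (ofList w) = 1} := by
  refine ⟨triangleGrammar π (hC.inv.mul hC), Set.ext fun w => ⟨fun hw => ?_, fun hw => ?_⟩⟩
  · exact map_ofList_of_mem_derivable hw
  · have h := (hrun w hw).mem_pending (hC := hC) rfl h1 h1
    simp only [List.reverse_nil, pending, inv_one, one_mul] at h
    exact h

section Ball

variable (π) in
def ball (K : ℕ) : Set G := (fun w => π (ofList w)) '' {w | w.length ≤ K}

variable {K : ℕ}

lemma ball_finite [Finite β] : (ball π K).Finite :=
  (List.finite_length_le β K).image _

lemma map_ofList_mem_ball {w : List β} (hw : w.length ≤ K) : π (ofList w) ∈ ball π K :=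
  ⟨w, hw, rfl⟩

lemma one_mem_ball : (1 : G) ∈ ball π K :=
  ⟨[], Nat.zero_le _, map_one π⟩

lemma run_pop_ball {z w v : List β} {h : G} (s r : List β) (hlen : (s ++ r).length ≤ K)
    (hr : Run π (ball π K) (π (ofList (s ++ r))) z w h v) :
    Run π (ball π K) (π (ofList r)) (z ++ s) w h v := by
  induction s using List.reverseRecOn generalizing r with
  | nil => simpa using hr
  | append_singleton s x ih =>
      have hxr : π (of x) * π (ofList r) = π (ofList (x :: r)) := by simp [ofList_cons]
      rw [← List.append_assoc]
      refine .pop (hxr ▸ map_ofList_mem_ball (by simp at hlen ⊢; omega)) (hxr ▸ ih (x :: r) ?_ ?_)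
      · simp at hlen ⊢; omega
      · simpa using hr

lemma run_read_ball {z w v : List β} {h : G} (ℓ s : List β) (hlen : (s ++ ℓ).length ≤ K)
    (hr : Run π (ball π K) (π (ofList (s ++ ℓ))) z w h v) :
    Run π (ball π K) (π (ofList s)) z (ℓ ++ w) h v := by
  induction ℓ generalizing s with
  | nil => simpa using hr
  | cons a ℓ ih =>
      have hsa : π (ofList s) * π (of a) = π (ofList (s ++ [a])) := by simp [ofList_append]
      refine .read (hsa ▸ map_ofList_mem_ball (by simp at hlen ⊢; omega)) (hsa ▸ ih _ ?_ ?_)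
      · simpa using hlen
      · simpa using hr

lemma run_push_ball (z q : List β) (hlen : q.length ≤ K) :
    Run π (ball π K) (π (ofList q)) z [] 1 (z ++ q) := by
  induction q generalizing z with
  | nil => simpa using Run.nil (π := π) (C := ball π K) 1 z
  | cons x q ih =>
      have hxq : (π (of x))⁻¹ * π (ofList (x :: q)) = π (ofList q) := by simp [ofList_cons]
      refine .push (hxq ▸ map_ofList_mem_ball (by simp at hlen ⊢; omega)) (hxq ▸ ?_)
      simpa using ih (z ++ [x]) (by simp at hlen ⊢; omega)

lemma run_replace {s ℓ q : List β} (hsℓ : s.length + ℓ.length ≤ K) (hq : q.length ≤ K)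
    (hval : π (ofList q) = π (ofList (s ++ ℓ))) : Run π (ball π K) 1 s ℓ 1 q := by
  have hpush := run_push_ball (π := π) [] q hq
  rw [hval] at hpush
  have hread := run_read_ball ℓ s (by simpa using hsℓ) hpush
  have hpop := run_pop_ball (z := []) s [] (by simpa using hsℓ.trans' (Nat.le_add_right _ _))
    (by simpa using hread)
  simpa using hpop

end Ball

end WordProblem

theorem DFA.exists_shorter_mem_accepts {β G σ : Type} [Group G] [Fintype σ] (M : DFA β σ)
    {π : FreeMonoid β →* G} {c : G} (hM : ∀ w ∈ M.accepts, π (ofList w) = c) {p z r : List β}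
    (hz : Fintype.card σ ≤ z.length) (h : p ++ z ++ r ∈ M.accepts) :
    ∃ z', z'.length < z.length ∧ π (ofList z') = π (ofList z) ∧ p ++ z' ++ r ∈ M.accepts := by
  obtain ⟨q, a, b, d, rfl, -, hb, ha, hloop, hd⟩ := M.evalFrom_split (s := M.eval p) hz rfl
  have hacc : p ++ (a ++ d) ++ r ∈ M.accepts := by
    have heval : ∀ x, M.eval (p ++ x ++ r) = M.evalFrom (M.evalFrom (M.eval p) x) r := by
      simp [DFA.eval, DFA.evalFrom_of_append]
    rw [DFA.mem_accepts, heval] at h ⊢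
    simpa only [DFA.evalFrom_of_append, ha, hloop] using h
  have hb1 : π (ofList b) = 1 := by
    have h₁ := hM _ h
    have h₂ := hM _ hacc
    simp only [ofList_append, map_mul] at h₁ h₂
    rw [← h₂] at h₁
    simpa [mul_assoc] using h₁
  refine ⟨a ++ d, ?_, by simp [ofList_append, hb1], hacc⟩
  have : b.length ≠ 0 := by simpa using hb
  simp; omega

lemma Language.exists_card_le_of_isRegular {ι T : Type} [Finite ι] {L : ι → Language T}
    (hL : ∀ i, (L i).IsRegular) :
    ∃ K, ∀ i, ∃ (σ : Type) (_ : Fintype σ) (M : DFA T σ),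
      M.accepts = L i ∧ Fintype.card σ ≤ K := by
  choose σ inst M hM using hL
  obtain ⟨K, hK⟩ := (Set.finite_range fun i => @Fintype.card (σ i) (inst i)).bddAbove
  exact ⟨K, fun i => ⟨σ i, inst i, M i, hM i, hK ⟨i, rfl⟩⟩⟩

namespace FreeGroup

variable {α : Type} [DecidableEq α]

theorem IsReduced.exists_reduce_append {u v : List (α × Bool)} (hu : IsReduced u)
    (hv : IsReduced v) :
    ∃ x y t, u = x ++ y ∧ v = invRev y ++ t ∧ reduce (u ++ v) = x ++ t := by
  induction u with
  | nil => exact ⟨[], [], v, rfl, rfl, hv.reduce_eq⟩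
  | cons c u ih =>
      obtain ⟨x, y, t, rfl, rfl, hred⟩ := ih (hu.infix (List.suffix_cons c _).isInfix)
      have hxt : IsReduced (x ++ t) := hred ▸ isReduced_iff_reduce_eq.2 reduce.idem
      have hc : reduce ((c :: (x ++ y)) ++ (invRev y ++ t)) = reduce (c :: (x ++ t)) := by
        rw [List.cons_append, ← reduce_cons_reduce, hred]
      cases x with
      | cons d x =>
          refine ⟨c :: d :: x, y, t, rfl, rfl, hc.trans (IsReduced.reduce_eq ?_)⟩
          exact isReduced_cons_cons.2 ⟨(isReduced_cons_cons.1 hu).1, hxt⟩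
      | nil =>
          simp only [List.nil_append] at hc hxt ⊢
          by_cases hct : IsReduced (c :: t)
          · exact ⟨[c], y, t, rfl, rfl, hc.trans hct.reduce_eq⟩
          obtain _ | ⟨d, t⟩ := t
          · exact absurd IsReduced.singleton hct
          have hd : d = (c.1, !c.2) := by
            obtain ⟨h₁, h₂⟩ := Classical.not_imp.1 fun h => hct (isReduced_cons_cons.2 ⟨h, hxt⟩)
            obtain ⟨c₁, c₂⟩ := c
            obtain ⟨d₁, d₂⟩ := d
            cases c₂ <;> cases d₂ <;> simp_all
          have hcancel : Red.Step (c :: (c.1, !c.2) :: t) t := Red.Step.not (L₁ := [])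
          refine ⟨[], c :: y, t, rfl, by simp [invRev, hd], ?_⟩
          rw [hc, hd, reduce.Step.eq hcancel, (hxt.infix (List.suffix_cons d t).isInfix).reduce_eq,
            List.nil_append]

end FreeGroup

namespace Stallings

open WordProblem
open FreeGroup (invRev IsReduced isReduced_iff_reduce_eq)

variable {α G : Type} [Group G] {π : FreeMonoid (α × Bool) →* G}

lemma ev_append (u v : Word α) : ev π (u ++ v) = ev π u * ev π v := by
  simp [ev, ofList_append]

lemma ev_invRev (hπ : IsMEpi π) (u : Word α) : ev π (invRev u) = (ev π u)⁻¹ := by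
  induction u with
  | nil => simp [ev]
  | cons x u ih =>
      have hx : ev π (invRev [x]) = (ev π [x])⁻¹ := hπ.matched x.1 x.2
      rw [FreeGroup.invRev_cons, ev_append, ih, hx, ← mul_inv_rev, ← ev_append,
        List.singleton_append]

section Pumping

variable {σ : Type} [Fintype σ] {M : DFA (α × Bool) σ} {c : G} {K : ℕ}

lemma exists_shorter_left (hπ : IsMEpi π) (hM : ∀ w ∈ M.accepts, ev π w = c)
    (hK : Fintype.card σ ≤ K) {y t : Word α} (hy : Fintype.card σ ≤ y.length)
    (h : invRev y ++ t ∈ M.accepts) :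
    ∃ y', y'.length < y.length ∧ invRev y' ++ t ∈ M.accepts ∧ Run π (ball π K) 1 y [] 1 y' := by
  obtain ⟨y₀, y₁, rfl, hy₁⟩ : ∃ y₀ y₁ : Word α, y = y₀ ++ y₁ ∧ y₁.length = Fintype.card σ :=
    ⟨_, _, (List.take_append_drop (y.length - Fintype.card σ) y).symm, by simp; omega⟩
  obtain ⟨z, hz, hzval, hzacc⟩ := M.exists_shorter_mem_accepts hM (p := []) (z := invRev y₁)
    (r := invRev y₀ ++ t) (by simp [hy₁]) (by simpa using h)
  refine ⟨y₀ ++ invRev z, ?_, by simpa using hzacc, (run_replace ?_ ?_ ?_).append_left y₀⟩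
  · simp at hz ⊢; omega
  · simp [hy₁, hK]
  · simp only [FreeGroup.invRev_length] at hz ⊢; omega
  · change ev π (invRev z) = ev π (y₁ ++ [])
    rw [ev_invRev hπ, List.append_nil, show ev π z = ev π (invRev y₁) from hzval, ev_invRev hπ,
      inv_inv]

lemma exists_shorter_right (hM : ∀ w ∈ M.accepts, ev π w = c) (hK : Fintype.card σ ≤ K)
    {y t : Word α} (ht : Fintype.card σ ≤ t.length)
    (h : invRev y ++ t ∈ M.accepts) :
    ∃ t', t'.length < t.length ∧ invRev y ++ t' ∈ M.accepts ∧ Run π (ball π K) 1 t' [] 1 t := by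
  obtain ⟨t₀, t₁, rfl, ht₁⟩ : ∃ t₀ t₁ : Word α, t = t₀ ++ t₁ ∧ t₁.length = Fintype.card σ :=
    ⟨_, _, (List.take_append_drop (t.length - Fintype.card σ) t).symm, by simp; omega⟩
  obtain ⟨z, hz, hzval, hzacc⟩ := M.exists_shorter_mem_accepts hM (p := invRev y ++ t₀) (z := t₁)
    (r := []) (by simp [ht₁]) (by simpa using h)
  refine ⟨t₀ ++ z, ?_, by simpa using hzacc, (run_replace ?_ ?_ ?_).append_left t₀⟩
  · simp; omega
  · simp; omega
  · omega
  · simpa using hzval.symm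

end Pumping

/-- Loops of `M` have value `1`, as all accepted words have the same value, so pumping them out
shortens `y` and `t` below the number of states; the short case is `run_replace`. -/
theorem run_of_invRev_append_mem (hπ : IsMEpi π) {σ : Type} [Fintype σ] {M : DFA (α × Bool) σ}
    {K : ℕ} (hK : Fintype.card σ ≤ K) {ℓ : Word α} (hℓ : ℓ.length ≤ 1)
    (hM : ∀ w ∈ M.accepts, ev π w = ev π ℓ) {y t : Word α} (h : invRev y ++ t ∈ M.accepts) :
    Run π (ball π K) 1 y ℓ 1 t := by
  induction hn : y.length + t.length using Nat.strong_induction_on generalizing y t with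
  | _ n ih =>
  subst hn
  by_cases hy : Fintype.card σ ≤ y.length
  · obtain ⟨y', hlen, hacc, hrun⟩ := exists_shorter_left hπ hM hK hy h
    simpa using hrun.trans (ih _ (by omega) hacc rfl)
  by_cases ht : Fintype.card σ ≤ t.length
  · obtain ⟨t', hlen, hacc, hrun⟩ := exists_shorter_right hM hK ht h
    simpa using (ih _ (by omega) hacc rfl).trans hrun
  refine run_replace (by omega) (by omega) ?_
  have hval : (ev π y)⁻¹ * ev π t = ev π ℓ := by
    rw [← ev_invRev hπ, ← ev_append]
    exact hM _ h
  change ev π t = ev π (y ++ ℓ)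
  rw [ev_append, ← hval, mul_inv_cancel_left]

theorem exists_bound_run_of_mem_sub [Finite α] (hπ : IsMEpi π) {S : Language (α × Bool)}
    (hS : IsStallingsSection π S) :
    ∃ K, ∀ (ℓ : Option (α × Bool)) (y t : Word α),
      invRev y ++ t ∈ sub S π {ev π ℓ.toList} → Run π (ball π K) 1 y ℓ.toList 1 t := by
  obtain ⟨K, hK⟩ := Language.exists_card_le_of_isRegular fun ℓ : Option (α × Bool) =>
    hS.s1 (ev π ℓ.toList)
  refine ⟨K, fun ℓ y t h => ?_⟩
  obtain ⟨σ, _, M, hM, hcard⟩ := hK ℓ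
  refine run_of_invRev_append_mem hπ hcard (by cases ℓ <;> simp) (fun w hw => ?_) (hM ▸ h)
  rw [hM] at hw
  exact hw.2

theorem run_of_mem_of_ev_eq {S : Language (α × Bool)} (hS : IsStallingsSection π S) {K : ℕ}
    (hstep : ∀ (ℓ : Option (α × Bool)) (y t : Word α),
      invRev y ++ t ∈ sub S π {ev π ℓ.toList} → Run π (ball π K) 1 y ℓ.toList 1 t)
    (w : Word α) : ∀ u ∈ S, ev π u = ev π w → Run π (ball π K) 1 [] w 1 u := by
  induction w using List.reverseRecOn with
  | nil => exact fun u hu hval => hstep none [] u ⟨hu, hval⟩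
  | append_singleton w a ih =>
      intro u hu hval
      have hsub : u ∈ sub S π {ev π w * ev π [a]} := ⟨hu, by rw [hval, ev_append]; rfl⟩
      -- by (S2) and free cancellation, `u = x t` with `x y ∈ S_{wπ}` and `y⁻¹ t ∈ S_{aπ}`
      obtain ⟨_, huv, hred⟩ := hS.s2 _ _ u hsub
      obtain ⟨u₁, ⟨hu₁, hu₁val⟩, v, hv, rfl⟩ := Language.mem_mul.1 huv
      classical
      obtain ⟨x, y, t, rfl, rfl, hxt⟩ := IsReduced.exists_reduce_append
        (isReduced_iff_reduce_eq.2 (hS.reduced _ hu₁))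
        (isReduced_iff_reduce_eq.2 (hS.reduced _ hv.1))
      rw [← hred, redW, hxt]
      exact (ih _ hu₁ hu₁val).trans ((hstep (some a) y t hv).append_left x)

end Stallings

open Stallings in
/-- If an m-epi `π : Ã* → G` admits a Stallings section, then the
word problem language `1π⁻¹ = {w ∈ Ã* : wπ = 1}` is context-free. -/
theorem wordProblem_isContextFree {α G : Type} [Finite α] [Group G]
    (π : FreeMonoid (α × Bool) →* G) (hπ : IsMEpi π)
    (S : Language (α × Bool)) (hS : IsStallingsSection π S) :
    Language.IsContextFree (setOf (fun w : Word α => ev π w = 1)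
      : Language (α × Bool)) := by
  obtain ⟨K, hstep⟩ := exists_bound_run_of_mem_sub hπ hS
  refine WordProblem.isContextFree_of_forall_run (WordProblem.ball_finite (π := π) (K := K))
    WordProblem.one_mem_ball fun w hw => ?_
  obtain ⟨u, hu, hu1⟩ := hS.exists_rep 1
  have hprefix := run_of_mem_of_ev_eq hS hstep w u hu (hu1.trans hw.symm)
  have hsuffix := hstep none u [] <| by
    rw [List.append_nil]
    exact ⟨hS.inv_mem u hu, by rw [Set.mem_singleton_iff, ev_invRev hπ, hu1]; simp [ev]⟩
  simpa using hprefix.trans hsuffix
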